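/- arXiv:2108.03943 — 2 statements merged into one kernel-verified Lean document; each statement's English description precedes it below -/
import Mathlib

section
/- Let V and W be finite sets, let G ≤ Sym(V) and H ≤ Sym(W) be transitive permutation groups, and let G × H act on V × W by (g,h)·(v,w) = (g(v), h(w)). Then the intersection density satisfies ρ(G × H) = ρ(G)·ρ(H). -/
/-! ### Basic definitions: derangement graphs, intersecting sets, EKR properties -/

/-- The derangement graph of a permutation group `G ≤ Sym(V)`: vertices are the elements
of `G`, and distinct `g`, `h` are adjacent iff `g * h⁻¹` is fixed-point-free on `V`. -/
def derGraph {V : Type*} (G : Subgroup (Equiv.Perm V)) : SimpleGraph G where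
  Adj g h := g ≠ h ∧ ∀ v : V, ((g : Equiv.Perm V) * (h : Equiv.Perm V)⁻¹) v ≠ v
  symm := by
    constructor
    rintro g h ⟨hne, hd⟩
    refine ⟨hne.symm, fun v hv => hd v ?_⟩
    have h2 := congrArg (⇑(((h : Equiv.Perm V) * (g : Equiv.Perm V)⁻¹)⁻¹)) hv
    simpa [mul_inv_rev] using h2.symm
  loopless := ⟨fun g hg => hg.1 rfl⟩

/-- A subset `I` of a permutation group `G ≤ Sym(V)` is intersecting if any two of its
elements agree on some point of `V`. -/
def IsIntersecting {V : Type*} (G : Subgroup (Equiv.Perm V)) (I : Set G) : Prop :=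
  ∀ g ∈ I, ∀ h ∈ I, ∃ v : V, (g : Equiv.Perm V) v = (h : Equiv.Perm V) v

/-- A permutation group `G ≤ Sym(V)` is transitive if it acts transitively on `V`. -/
def IsTransitive {V : Type*} (G : Subgroup (Equiv.Perm V)) : Prop :=
  ∀ v w : V, ∃ g ∈ G, g v = w

/-- A permutation group is regular if it is transitive and all point stabilizers are trivial. -/
def IsRegularGroup {V : Type*} (G : Subgroup (Equiv.Perm V)) : Prop :=
  IsTransitive G ∧ ∀ g ∈ G, ∀ v : V, g v = v → g = 1

/-- The stabilizer of a point `v`, as a subset of the permutation group `G`. -/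
def stabSet {V : Type*} (G : Subgroup (Equiv.Perm V)) (v : V) : Set G :=
  {g : G | (g : Equiv.Perm V) v = v}

/-- The intersection density `ρ(G)` of a (transitive) permutation group `G`: the maximum of
`|I| / |G_v|` over all intersecting sets `I` of `G`, where `G_v` is a point stabilizer. -/
noncomputable def interDensity {V : Type*} (G : Subgroup (Equiv.Perm V)) : ℝ :=
  sSup {x : ℝ | ∃ (I : Set G) (v : V), IsIntersecting G I ∧
    x = (Nat.card I : ℝ) / (Nat.card (stabSet G v) : ℝ)}

/-- A permutation group has the EKR-property if every intersecting set has size at most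
the size of the largest point stabilizer. -/
def HasEKR {V : Type*} (G : Subgroup (Equiv.Perm V)) : Prop :=
  ∀ I : Set G, IsIntersecting G I → Nat.card I ≤ ⨆ v : V, Nat.card (stabSet G v)

/-- A permutation group has the strict-EKR-property if every intersecting set of maximum
size is a coset of a point stabilizer. -/
def HasStrictEKR {V : Type*} (G : Subgroup (Equiv.Perm V)) : Prop :=
  ∀ I : Set G, IsIntersecting G I →
    (∀ J : Set G, IsIntersecting G J → Nat.card J ≤ Nat.card I) →
    ∃ (v : V) (a : G), I = (fun g => a * g) '' stabSet G v

/-! ### Graph products and related graph-theoretic notions -/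

/-- The strong product of two simple graphs. -/
def strongProd {α β : Type*} (X : SimpleGraph α) (Y : SimpleGraph β) :
    SimpleGraph (α × β) where
  Adj p q := (p.1 = q.1 ∧ Y.Adj p.2 q.2) ∨ (p.2 = q.2 ∧ X.Adj p.1 q.1) ∨
    (X.Adj p.1 q.1 ∧ Y.Adj p.2 q.2)
  symm := by
    constructor
    rintro p q (⟨h1, h2⟩ | ⟨h1, h2⟩ | ⟨h1, h2⟩)
    · exact Or.inl ⟨h1.symm, h2.symm⟩
    · exact Or.inr (Or.inl ⟨h1.symm, h2.symm⟩)
    · exact Or.inr (Or.inr ⟨h1.symm, h2.symm⟩)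
  loopless := by
    constructor
    rintro p (⟨_, h⟩ | ⟨_, h⟩ | ⟨h, _⟩)
    · exact Y.loopless.irrefl _ h
    · exact X.loopless.irrefl _ h
    · exact X.loopless.irrefl _ h

/-- The tensor (direct, categorical) product of two simple graphs. -/
def tensorProd {α β : Type*} (X : SimpleGraph α) (Y : SimpleGraph β) :
    SimpleGraph (α × β) where
  Adj p q := X.Adj p.1 q.1 ∧ Y.Adj p.2 q.2
  symm := ⟨fun _ _ ⟨h1, h2⟩ => ⟨h1.symm, h2.symm⟩⟩
  loopless := ⟨fun _ ⟨h1, _⟩ => X.loopless.irrefl _ h1⟩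

/-- The tensor (direct) product of a family of simple graphs: two tuples are adjacent
iff they are adjacent in every coordinate (for a nonempty index type this coincides with
the definition below, where distinctness is required to keep the graph loopless). -/
def tensorPi {ι : Type*} {α : ι → Type*} (X : ∀ i, SimpleGraph (α i)) :
    SimpleGraph (∀ i, α i) where
  Adj f g := f ≠ g ∧ ∀ i, (X i).Adj (f i) (g i)
  symm := ⟨fun _ _ ⟨hne, h⟩ => ⟨hne.symm, fun i => (h i).symm⟩⟩
  loopless := ⟨fun _ h => h.1 rfl⟩

/-- The disjoint union of `ι`-indexed copies of a simple graph `X`. -/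
def copiesGraph (ι : Type*) {α : Type*} (X : SimpleGraph α) : SimpleGraph (ι × α) where
  Adj p q := p.1 = q.1 ∧ X.Adj p.2 q.2
  symm := ⟨fun _ _ ⟨h1, h2⟩ => ⟨h1.symm, h2.symm⟩⟩
  loopless := ⟨fun _ h => X.loopless.irrefl _ h.2⟩

/-- The lexicographic product (wreath product) `X[Y]` of simple graphs. -/
def lexProd {α β : Type*} (X : SimpleGraph α) (Y : SimpleGraph β) :
    SimpleGraph (α × β) where
  Adj p q := X.Adj p.1 q.1 ∨ (p.1 = q.1 ∧ Y.Adj p.2 q.2)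
  symm := by
    constructor
    rintro p q (h | ⟨h1, h2⟩)
    · exact Or.inl h.symm
    · exact Or.inr ⟨h1.symm, h2.symm⟩
  loopless := by
    constructor
    rintro p (h | ⟨_, h⟩)
    · exact X.loopless.irrefl _ h
    · exact Y.loopless.irrefl _ h

/-- A simple graph is complete multipartite with `k` parts if its vertex set can be
partitioned into `k` (nonempty) parts so that two vertices are adjacent iff they lie in
different parts. -/
def IsCompleteMultipartiteWith {α : Type*} (X : SimpleGraph α) (k : ℕ) : Prop :=
  ∃ f : α → Fin k, Function.Surjective f ∧ ∀ a b : α, X.Adj a b ↔ f a ≠ f b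

/-- An independent set (coclique) of a simple graph. -/
def IsIndep {α : Type*} (X : SimpleGraph α) (A : Set α) : Prop :=
  ∀ a ∈ A, ∀ b ∈ A, ¬ X.Adj a b

/-- The independence number `α(X)` of a simple graph. -/
noncomputable def indepNum {α : Type*} (X : SimpleGraph α) : ℕ :=
  sSup {k : ℕ | ∃ A : Set α, IsIndep X A ∧ Nat.card A = k}

/-- The closed neighbourhood `N[A]` of a set `A` of vertices. -/
def closedNbhd {α : Type*} (X : SimpleGraph α) (A : Set α) : Set α :=
  {b | ∃ a ∈ A, a = b ∨ X.Adj a b}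

/-- A graph `X` is IS-primitive if there is no non-maximum independent set `A` with
`|A| / |N[A]| = α(X) / |V(X)|`. -/
def IsISPrimitive {α : Type*} (X : SimpleGraph α) : Prop :=
  ¬ ∃ A : Set α, IsIndep X A ∧ Nat.card A < indepNum X ∧
    (Nat.card A : ℚ) / (Nat.card (closedNbhd X A) : ℚ) =
      (indepNum X : ℚ) / (Nat.card α : ℚ)

/-- A simple graph is vertex-transitive if its automorphism group acts transitively on the
vertices. -/
def IsVertexTransitive {α : Type*} (X : SimpleGraph α) : Prop :=
  ∀ a b : α, ∃ e : X ≃g X, e a = b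

/-! ### External and internal direct products of permutation groups -/

/-- The canonical monoid homomorphism `Sym(V) × Sym(W) → Sym(V × W)`. -/
def permProdCongrHom (V W : Type*) : Equiv.Perm V × Equiv.Perm W →* Equiv.Perm (V × W) where
  toFun p := Equiv.prodCongr p.1 p.2
  map_one' := Equiv.ext fun _ => rfl
  map_mul' := fun _ _ => Equiv.ext fun _ => rfl

/-- The external direct product of permutation groups `G ≤ Sym(V)` and `H ≤ Sym(W)`,
acting on `V × W` by `(g,h)⬝(v,w) = (g v, h w)`. -/
def extProd {V W : Type*} (G : Subgroup (Equiv.Perm V)) (H : Subgroup (Equiv.Perm W)) :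
    Subgroup (Equiv.Perm (V × W)) :=
  Subgroup.map (permProdCongrHom V W) (G.prod H)

/-- The internal direct product of a family of permutation groups `G i ≤ Sym(V i)`,
acting componentwise on the disjoint union `Σ i, V i`. -/
def intProd {ι : Type*} {V : ι → Type*} (G : ∀ i, Subgroup (Equiv.Perm (V i))) :
    Subgroup (Equiv.Perm (Σ i, V i)) :=
  Subgroup.map (Equiv.Perm.sigmaCongrRightHom V) (Subgroup.pi Set.univ G)

/-! ### Wreath products of permutation groups -/

/-- The permutation of `V × {1,…,n}` associated to an element `((g₁,…,gₙ), h)` of the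
wreath product: `(a, i) ↦ (gᵢ a, h i)`. -/
def wreathPerm {V : Type*} {n : ℕ} (g : Fin n → Equiv.Perm V) (h : Equiv.Perm (Fin n)) :
    Equiv.Perm (V × Fin n) where
  toFun p := (g p.2 p.1, h p.2)
  invFun p := ((g (h⁻¹ p.2))⁻¹ p.1, h⁻¹ p.2)
  left_inv := by rintro ⟨a, i⟩; simp
  right_inv := by rintro ⟨b, j⟩; simp

/-- The wreath product `G ≀ H` of `G ≤ Sym(V)` by `H ≤ Sₙ`, as a permutation group
acting on `V × {1,…,n}`. -/
def wreathProd {V : Type*} {n : ℕ} (G : Subgroup (Equiv.Perm V))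
    (H : Subgroup (Equiv.Perm (Fin n))) : Subgroup (Equiv.Perm (V × Fin n)) where
  carrier := {σ | ∃ (g : Fin n → Equiv.Perm V) (h : Equiv.Perm (Fin n)),
    (∀ i, g i ∈ G) ∧ h ∈ H ∧ σ = wreathPerm g h}
  one_mem' := ⟨fun _ => 1, 1, fun _ => G.one_mem, H.one_mem, Equiv.ext fun _ => rfl⟩
  mul_mem' := by
    rintro σ τ ⟨g, h, hg, hh, rfl⟩ ⟨g', h', hg', hh', rfl⟩
    exact ⟨fun i => g (h' i) * g' i, h * h',
      fun i => G.mul_mem (hg _) (hg' _), H.mul_mem hh hh', Equiv.ext fun _ => rfl⟩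
  inv_mem' := by
    rintro σ ⟨g, h, hg, hh, rfl⟩
    exact ⟨fun i => (g (h⁻¹ i))⁻¹, h⁻¹,
      fun i => G.inv_mem (hg _), H.inv_mem hh, Equiv.ext fun _ => rfl⟩

theorem mem_wreathProd {V : Type*} {n : ℕ} {G : Subgroup (Equiv.Perm V)}
    {H : Subgroup (Equiv.Perm (Fin n))} {σ : Equiv.Perm (V × Fin n)} :
    σ ∈ wreathProd G H ↔ ∃ (g : Fin n → Equiv.Perm V) (h : Equiv.Perm (Fin n)),
      (∀ i, g i ∈ G) ∧ h ∈ H ∧ σ = wreathPerm g h := Iff.rfl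

/-!
An intersecting set `K` of `G × H` lies inside `A × B`, where its projections `A` and `B` are
intersecting sets of `G` and `H`; since the stabilizer of `(v, w)` is `G_v × H_w`, this gives
`|K| / |(G × H)_(v,w)| ≤ (|A| / |G_v|) (|B| / |H_w|) ≤ ρ(G) ρ(H)`. Conversely the product of
two intersecting sets is intersecting, and products of maximizers attain `ρ(G) ρ(H)`.
-/

lemma Set.ncard_le_ncard_image_fst_mul_ncard_image_snd {α β : Type*} [Finite α] [Finite β]
    (s : Set (α × β)) : s.ncard ≤ (Prod.fst '' s).ncard * (Prod.snd '' s).ncard :=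
  Set.ncard_prod ▸ Set.ncard_le_ncard Set.subset_fst_image_prod_snd_image (Set.toFinite _)

section InterDensity

variable {V : Type*} (G : Subgroup (Equiv.Perm V))

def intersectingDensities : Set ℝ :=
  {x : ℝ | ∃ (I : Set G) (v : V), IsIntersecting G I ∧
    x = (Nat.card I : ℝ) / (Nat.card (stabSet G v) : ℝ)}

lemma intersectingDensities_finite [Finite V] : (intersectingDensities G).Finite := by
  refine (Set.finite_range fun p : Set G × V =>
    (Nat.card p.1 : ℝ) / (Nat.card (stabSet G p.2) : ℝ)).subset ?_
  rintro x ⟨I, v, -, rfl⟩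
  exact ⟨(I, v), rfl⟩

lemma intersectingDensities_nonempty [Nonempty V] : (intersectingDensities G).Nonempty :=
  ⟨_, ∅, Classical.arbitrary V, fun _ h => h.elim, rfl⟩

lemma interDensity_nonneg : 0 ≤ interDensity G :=
  Real.sSup_nonneg fun _ ⟨_, _, _, hx⟩ => hx ▸ by positivity

lemma div_card_stabSet_le_interDensity [Finite V] {I : Set G} (hI : IsIntersecting G I)
    (v : V) : (Nat.card I : ℝ) / Nat.card (stabSet G v) ≤ interDensity G :=
  le_csSup (intersectingDensities_finite G).bddAbove ⟨I, v, hI, rfl⟩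

lemma exists_isIntersecting_div_card_stabSet_eq_interDensity [Finite V] [Nonempty V] :
    ∃ (I : Set G) (v : V), IsIntersecting G I ∧
      (Nat.card I : ℝ) / Nat.card (stabSet G v) = interDensity G := by
  obtain ⟨I, v, hI, hx⟩ :=
    (intersectingDensities_nonempty G).csSup_mem (intersectingDensities_finite G)
  exact ⟨I, v, hI, hx.symm⟩

lemma interDensity_le [Nonempty V] {c : ℝ} (h : ∀ (I : Set G) (v : V), IsIntersecting G I →
    (Nat.card I : ℝ) / Nat.card (stabSet G v) ≤ c) : interDensity G ≤ c :=
  csSup_le (intersectingDensities_nonempty G) fun _ ⟨I, v, hI, hx⟩ => hx ▸ h I v hI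

end InterDensity

section ExtProd

variable {V W : Type*} [Nonempty V] [Nonempty W]

lemma permProdCongrHom_injective : Function.Injective (permProdCongrHom V W) := by
  intro p q hpq
  obtain ⟨v⟩ := ‹Nonempty V›
  obtain ⟨w⟩ := ‹Nonempty W›
  have happly (x : V × W) : (p.1 x.1, p.2 x.2) = (q.1 x.1, q.2 x.2) :=
    congrArg (· x) hpq
  exact Prod.ext (Equiv.ext fun x => congrArg Prod.fst (happly (x, w)))
    (Equiv.ext fun y => congrArg Prod.snd (happly (v, y)))

variable (G : Subgroup (Equiv.Perm V)) (H : Subgroup (Equiv.Perm W))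

noncomputable def extProdEquiv : G × H ≃* extProd G H :=
  (G.prodEquiv H).symm.trans ((G.prod H).equivMapOfInjective _ permProdCongrHom_injective)

@[simp]
lemma extProdEquiv_apply (p : G × H) (x : V × W) :
    (extProdEquiv G H p : Equiv.Perm (V × W)) x =
      ((p.1 : Equiv.Perm V) x.1, (p.2 : Equiv.Perm W) x.2) := rfl

lemma preimage_extProdEquiv_stabSet (v : V) (w : W) :
    extProdEquiv G H ⁻¹' stabSet (extProd G H) (v, w) = stabSet G v ×ˢ stabSet H w := by
  ext p
  simp [stabSet, Prod.ext_iff]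

lemma card_stabSet_extProd (v : V) (w : W) :
    Nat.card (stabSet (extProd G H) (v, w)) =
      Nat.card (stabSet G v) * Nat.card (stabSet H w) := by
  rw [← Nat.card_preimage_of_injective (extProdEquiv G H).injective (by simp),
    preimage_extProdEquiv_stabSet, Nat.card_congr (Equiv.Set.prod _ _), Nat.card_prod]

variable {G H}

lemma IsIntersecting.image_extProdEquiv_prod {I : Set G} {J : Set H} (hI : IsIntersecting G I)
    (hJ : IsIntersecting H J) : IsIntersecting (extProd G H) (extProdEquiv G H '' I ×ˢ J) := by
  rintro _ ⟨⟨g, h⟩, ⟨hg, hh⟩, rfl⟩ _ ⟨⟨g', h'⟩, ⟨hg', hh'⟩, rfl⟩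
  obtain ⟨v, hv⟩ := hI g hg g' hg'
  obtain ⟨w, hw⟩ := hJ h hh h' hh'
  exact ⟨(v, w), by simp [hv, hw]⟩

lemma IsIntersecting.image_fst_preimage_extProdEquiv {K : Set (extProd G H)}
    (hK : IsIntersecting (extProd G H) K) :
    IsIntersecting G (Prod.fst '' (extProdEquiv G H ⁻¹' K)) := by
  rintro _ ⟨p, hp, rfl⟩ _ ⟨q, hq, rfl⟩
  obtain ⟨x, hx⟩ := hK _ hp _ hq
  exact ⟨x.1, by simpa using congrArg Prod.fst hx⟩

lemma IsIntersecting.image_snd_preimage_extProdEquiv {K : Set (extProd G H)}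
    (hK : IsIntersecting (extProd G H) K) :
    IsIntersecting H (Prod.snd '' (extProdEquiv G H ⁻¹' K)) := by
  rintro _ ⟨p, hp, rfl⟩ _ ⟨q, hq, rfl⟩
  obtain ⟨x, hx⟩ := hK _ hp _ hq
  exact ⟨x.2, by simpa using congrArg Prod.snd hx⟩

variable [Finite V] [Finite W]

lemma div_card_stabSet_extProd_le {K : Set (extProd G H)} (hK : IsIntersecting (extProd G H) K)
    (v : V) (w : W) : (Nat.card K : ℝ) / Nat.card (stabSet (extProd G H) (v, w)) ≤
      interDensity G * interDensity H := by
  set L := extProdEquiv G H ⁻¹' K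
  have hKL : Nat.card K = Nat.card L :=
    (Nat.card_preimage_of_injective (extProdEquiv G H).injective (by simp)).symm
  have hL : (Nat.card L : ℝ) ≤ Nat.card (Prod.fst '' L) * Nat.card (Prod.snd '' L) := by
    exact_mod_cast Set.ncard_le_ncard_image_fst_mul_ncard_image_snd L
  calc (Nat.card K : ℝ) / Nat.card (stabSet (extProd G H) (v, w))
      ≤ Nat.card (Prod.fst '' L) * Nat.card (Prod.snd '' L) /
          (Nat.card (stabSet G v) * Nat.card (stabSet H w)) := by
        rw [card_stabSet_extProd, hKL]; push_cast; gcongr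
    _ = Nat.card (Prod.fst '' L) / Nat.card (stabSet G v) *
          (Nat.card (Prod.snd '' L) / Nat.card (stabSet H w)) := mul_div_mul_comm _ _ _ _
    _ ≤ interDensity G * interDensity H :=
        mul_le_mul (div_card_stabSet_le_interDensity G hK.image_fst_preimage_extProdEquiv v)
          (div_card_stabSet_le_interDensity H hK.image_snd_preimage_extProdEquiv w)
          (by positivity) (interDensity_nonneg G)

variable (G H)

lemma mul_interDensity_le_interDensity_extProd :
    interDensity G * interDensity H ≤ interDensity (extProd G H) := by
  obtain ⟨I, v, hI, hIv⟩ := exists_isIntersecting_div_card_stabSet_eq_interDensity G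
  obtain ⟨J, w, hJ, hJw⟩ := exists_isIntersecting_div_card_stabSet_eq_interDensity H
  calc interDensity G * interDensity H
      = (Nat.card (extProdEquiv G H '' I ×ˢ J) : ℝ) /
          Nat.card (stabSet (extProd G H) (v, w)) := by
        rw [← hIv, ← hJw, Nat.card_image_of_injective (extProdEquiv G H).injective,
          card_stabSet_extProd, Nat.card_congr (Equiv.Set.prod _ _), Nat.card_prod]
        push_cast
        exact div_mul_div_comm _ _ _ _
    _ ≤ interDensity (extProd G H) :=
        div_card_stabSet_le_interDensity _ (hI.image_extProdEquiv_prod hJ) _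

end ExtProd

theorem interDensity_extProd_general {V W : Type*} [Fintype V] [Fintype W] [Nonempty V] [Nonempty W]
    (G : Subgroup (Equiv.Perm V)) (H : Subgroup (Equiv.Perm W)) :
    interDensity (extProd G H) = interDensity G * interDensity H := by
  refine le_antisymm (interDensity_le _ ?_) (mul_interDensity_le_interDensity_extProd G H)
  rintro K ⟨v, w⟩ hK
  exact div_card_stabSet_extProd_le hK v w

/-- For transitive permutation groups `G ≤ Sym(V)` and `H ≤ Sym(W)`
on finite sets, the intersection density of the external direct product satisfies
`ρ(G × H) = ρ(G) * ρ(H)`. -/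
theorem interDensity_extProd {V W : Type*} [Fintype V] [Fintype W] [Nonempty V] [Nonempty W]
    (G : Subgroup (Equiv.Perm V)) (H : Subgroup (Equiv.Perm W))
    (hG : IsTransitive G) (hH : IsTransitive H) :
    interDensity (extProd G H) = interDensity G * interDensity H :=
  interDensity_extProd_general G H
end

section
/- Let n ≥ 3 and let H ≤ Sₙ be a transitive permutation group having the strict-EKR-property that contains an element fixing exactly one point of {1,…,n}. Then the wreath product S₃ ≀ H, acting on {1,2,3} × {1,…,n} by ((g₁,…,gₙ),h)·(a,i) = (g_i(a), h(i)), has the strict-EKR-property. -/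
/-!
Write an element of `S₃ ≀ H` as `(g, h)` with `g : Fin n → S₃`. Two permutations of `Fin 3`
agree somewhere iff they are equal or of opposite sign, so a set of tuples `g` that pairwise
agree somewhere meets each orbit of the diagonal left action of `A₃` at most once, and has at
most `6ⁿ / 3 = 2 · 6ⁿ⁻¹` elements. For a maximum intersecting set `I`, the projection `S` to
`H` is intersecting and every fibre is such a set of tuples; comparing with a point
stabiliser, of size `2 · 6ⁿ⁻¹ · |H_v|`, shows that `S` is a maximum intersecting set of `H`,
hence a coset `a H_j`, and that all fibres are full. If `w ∈ H` fixes only `j`, then `a` and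
`a w` lie in `S` and agree only at `j`; a full fibre contains tuples of both signs at `j`,
so the fibre over `a` is the cylinder `{g | g j ∈ {x, y}}` with `x`, `y` of opposite sign.
Testing against this cylinder forces `g j ∈ {x, y}` for every `(g, h) ∈ I`, and then `I`
is the coset through `((x, …, x), a)` of the stabiliser of `(b, j)`, where `x b = y b`.
-/

open Equiv Equiv.Perm

section PermGroup

variable {V : Type*} {G : Subgroup (Perm V)}

theorem isIntersecting_stabSet (v : V) : IsIntersecting G (stabSet G v) :=
  fun _ hg _ hh => ⟨v, hg.trans hh.symm⟩

variable (G) in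
theorem exists_isIntersecting_forall_card_le [Finite V] :
    ∃ I : Set G, IsIntersecting G I ∧
      ∀ J, IsIntersecting G J → Nat.card J ≤ Nat.card I := by
  have : Nonempty {I : Set G // IsIntersecting G I} := ⟨⟨∅, fun _ h => h.elim⟩⟩
  obtain ⟨⟨I, hI⟩, hmax⟩ := Finite.exists_max fun I : {I : Set G // IsIntersecting G I} =>
    Nat.card I.1
  exact ⟨I, hI, fun J hJ => hmax ⟨J, hJ⟩⟩

theorem HasStrictEKR.exists_forall_card_le [Finite V] (hG : HasStrictEKR G) :
    ∃ v, ∀ J, IsIntersecting G J → Nat.card J ≤ Nat.card (stabSet G v) := by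
  obtain ⟨I, hI, hmax⟩ := exists_isIntersecting_forall_card_le G
  obtain ⟨v, a, rfl⟩ := hG I hI hmax
  refine ⟨v, fun J hJ => (hmax J hJ).trans_eq ?_⟩
  exact Nat.card_image_of_injective (mul_right_injective a) _

theorem eq_image_mul_stabSet_of_forall_apply_eq [Finite V] {I : Set G} {v : V} (a : G)
    (hI : ∀ σ ∈ I, (σ : Perm V) v = (a : Perm V) v)
    (hcard : Nat.card (stabSet G v) ≤ Nat.card I) :
    I = (a * ·) '' stabSet G v := by
  have hsub : I ⊆ (a * ·) '' stabSet G v := fun σ hσ =>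
    ⟨a⁻¹ * σ, by simp [stabSet, hI σ hσ], mul_inv_cancel_left a σ⟩
  refine Set.eq_of_subset_of_ncard_le hsub ?_ (Set.toFinite _)
  rwa [← Nat.card_coe_set_eq, ← Nat.card_coe_set_eq,
    Nat.card_image_of_injective (mul_right_injective a)]

theorem IsTransitive.exists_mem_fixing_exactly (hG : IsTransitive G)
    (hfix : ∃ g ∈ G, ∃! v : V, g v = v) (w : V) : ∃ g ∈ G, ∀ v, g v = v ↔ v = w := by
  obtain ⟨g, hg, u, hu, huniq⟩ := hfix
  obtain ⟨t, ht, rfl⟩ := hG u w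
  refine ⟨t * g * t⁻¹, G.mul_mem (G.mul_mem ht hg) (G.inv_mem ht), fun v => ?_⟩
  rw [Perm.mul_apply, Perm.mul_apply, ← eq_inv_iff_eq (f := t), ← inv_eq_iff_eq (f := t)]
  exact ⟨huniq _, fun h => h ▸ hu⟩

end PermGroup

theorem eq_of_sign_eq_of_apply_eq {x y : Perm (Fin 3)} {a : Fin 3} (hs : sign x = sign y)
    (h : x a = y a) : x = y := by
  revert x y a; decide

theorem exists_apply_eq_of_sign_ne {x y : Perm (Fin 3)} (hs : sign x ≠ sign y) :
    ∃ a, x a = y a := by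
  revert x y; decide

theorem card_setOf_apply_eq_self (a : Fin 3) : Nat.card {x : Perm (Fin 3) | x a = a} = 2 := by
  rw [Nat.card_eq_fintype_card]; revert a; decide

theorem card_perm_fin_three : Nat.card (Perm (Fin 3)) = 6 := by
  rw [Nat.card_perm, Nat.card_eq_fintype_card, Fintype.card_fin]; rfl

section Tuples

variable {ι α : Type*}

theorem card_setOf_apply_mem [Fintype ι] [DecidableEq ι] (j : ι) (s : Set α) :
    Nat.card {u : ι → α | u j ∈ s} = Nat.card s * Nat.card α ^ (Fintype.card ι - 1) := by
  have e : {u : ι → α | u j ∈ s} ≃ s × ({k // k ≠ j} → α) :=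
    (subtypeEquiv (funSplitAt j α) fun _ => Iff.rfl).trans prodSubtypeFstEquivSubtypeProd
  rw [Nat.card_congr e, Nat.card_prod, Nat.card_fun, Nat.card_eq_fintype_card
    (α := {k // k ≠ j}), Fintype.card_subtype_compl, Fintype.card_subtype_eq]

-- `normalizeAt j g = normalizeAt j g'` iff `g' = d * g` for an even `d`, and an intersecting
-- family contains at most one tuple of each such class.
def normalizeAt (j : ι) (g : ι → Perm (Fin 3)) : (ι → Perm (Fin 3)) × ℤˣ :=
  (fun i => (g j)⁻¹ * g i, sign (g j))

theorem normalizeAt_mem (j : ι) (g : ι → Perm (Fin 3)) :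
    normalizeAt j g ∈ {u : ι → Perm (Fin 3) | u j ∈ ({1} : Set _)} ×ˢ Set.univ :=
  ⟨inv_mul_cancel (g j), trivial⟩

theorem ncard_normalizeAt_codomain [Fintype ι] [DecidableEq ι] (j : ι) :
    ({u : ι → Perm (Fin 3) | u j ∈ ({1} : Set _)} ×ˢ (Set.univ : Set ℤˣ)).ncard =
      2 * 6 ^ (Fintype.card ι - 1) := by
  rw [Set.ncard_prod, ← Nat.card_coe_set_eq, card_setOf_apply_mem, card_perm_fin_three,
    Set.ncard_univ, Nat.card_unique, Nat.card_eq_fintype_card, Fintype.card_units_int, one_mul,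
    mul_comm]

theorem injOn_normalizeAt {F : Set (ι → Perm (Fin 3))}
    (hF : ∀ g ∈ F, ∀ g' ∈ F, ∃ i a, g i a = g' i a) (j : ι) :
    Set.InjOn (normalizeAt j) F := by
  intro g hg g' hg' he
  have hquot : ∀ i, (g j)⁻¹ * g i = (g' j)⁻¹ * g' i := congrFun (congrArg Prod.fst he)
  have hsign : sign (g j) = sign (g' j) := congrArg Prod.snd he
  have hg_eq : ∀ i, g i = g j * ((g j)⁻¹ * g i) := fun i => (mul_inv_cancel_left _ _).symm
  have hg'_eq : ∀ i, g' i = g' j * ((g j)⁻¹ * g i) := fun i => by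
    rw [hquot i]; exact (mul_inv_cancel_left _ _).symm
  obtain ⟨i, a, hia⟩ := hF g hg g' hg'
  rw [hg_eq i, hg'_eq i] at hia
  have hj : g j = g' j := eq_of_sign_eq_of_apply_eq hsign hia
  funext i
  rw [hg_eq i, hg'_eq i, hj]

variable [Fintype ι] [DecidableEq ι] {F : Set (ι → Perm (Fin 3))}

theorem card_le_of_forall_exists_apply_eq [Nonempty ι]
    (hF : ∀ g ∈ F, ∀ g' ∈ F, ∃ i a, g i a = g' i a) :
    Nat.card F ≤ 2 * 6 ^ (Fintype.card ι - 1) := by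
  obtain ⟨j⟩ := ‹Nonempty ι›
  rw [Nat.card_coe_set_eq, ← ncard_normalizeAt_codomain j]
  exact Set.ncard_le_ncard_of_injOn _ (fun g _ => normalizeAt_mem j g) (injOn_normalizeAt hF j)

theorem exists_mem_sign_eq_of_card_eq (hF : ∀ g ∈ F, ∀ g' ∈ F, ∃ i a, g i a = g' i a)
    (hcard : Nat.card F = 2 * 6 ^ (Fintype.card ι - 1)) (j : ι) (s : ℤˣ) :
    ∃ g ∈ F, sign (g j) = s := by
  obtain ⟨g, hg, he⟩ := Set.surj_on_of_inj_on_of_ncard_le (fun g _ => normalizeAt j g)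
    (fun g _ => normalizeAt_mem j g) (fun _ _ hg hg' => injOn_normalizeAt hF j hg hg')
    (by rw [ncard_normalizeAt_codomain, ← hcard, Nat.card_coe_set_eq]) (Set.toFinite _)
    (1, s) ⟨rfl, trivial⟩
  exact ⟨g, hg, (congrArg Prod.snd he).symm⟩

end Tuples

theorem card_image_snd_eq_and_card_fiber_eq {α β : Type*} [Finite α] [Finite β]
    {T : Set (α × β)} {B m : ℕ} (hB : 0 < B) (hfib : ∀ b, Nat.card {a | (a, b) ∈ T} ≤ B)
    (hm : Nat.card (Prod.snd '' T) ≤ m) (hT : B * m ≤ Nat.card T) :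
    Nat.card (Prod.snd '' T) = m ∧ ∀ b ∈ Prod.snd '' T, Nat.card {a | (a, b) ∈ T} = B := by
  have : Fintype (Prod.snd '' T) := Fintype.ofFinite _
  have hsum : Nat.card T = ∑ b : Prod.snd '' T, Nat.card {a | (a, b.1) ∈ T} := by
    rw [← Nat.card_sigma]
    exact Nat.card_congr
      { toFun := fun p => ⟨⟨p.1.2, p.1, p.2, rfl⟩, p.1.1, p.2⟩
        invFun := fun q => ⟨(q.2.1, q.1.1), q.2.2⟩
        left_inv := fun _ => rfl
        right_inv := fun _ => rfl }
  have hle : ∑ b : Prod.snd '' T, Nat.card {a | (a, b.1) ∈ T} ≤ ∑ _b : Prod.snd '' T, B :=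
    Finset.sum_le_sum fun b _ => hfib b
  have hsumB : ∑ _b : Prod.snd '' T, B = B * Nat.card (Prod.snd '' T) := by
    rw [Finset.sum_const, Finset.card_univ, smul_eq_mul, mul_comm, Nat.card_eq_fintype_card]
  have hS : Nat.card (Prod.snd '' T) = m := le_antisymm hm
    (Nat.le_of_mul_le_mul_left (hT.trans (hsum.trans_le (hle.trans_eq hsumB))) hB)
  refine ⟨hS, fun b hb => ?_⟩
  have heq : ∑ b : Prod.snd '' T, Nat.card {a | (a, b.1) ∈ T} = ∑ _b : Prod.snd '' T, B :=
    le_antisymm hle (by rw [hsumB, hS, ← hsum]; exact hT)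
  exact (Finset.sum_eq_sum_iff_of_le fun b _ => hfib b.1).1 heq ⟨b, hb⟩ (Finset.mem_univ _)

section Wreath

variable {V : Type*} {n : ℕ} {H : Subgroup (Perm (Fin n))}

theorem wreathPerm_eq_wreathPerm_iff [Nonempty V] {g g' : Fin n → Perm V}
    {h h' : Perm (Fin n)} : wreathPerm g h = wreathPerm g' h' ↔ g = g' ∧ h = h' := by
  refine ⟨fun e => ⟨funext fun i => Perm.ext fun a => ?_, Perm.ext fun i => ?_⟩,
    fun ⟨hg, hh⟩ => hg ▸ hh ▸ rfl⟩
  · exact congrArg Prod.fst (DFunLike.congr_fun e (a, i))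
  · exact congrArg Prod.snd (DFunLike.congr_fun e (Classical.arbitrary V, i))

variable (H) in
noncomputable def wreathEquiv [Nonempty V] :
    (Fin n → Perm V) × H ≃ wreathProd (⊤ : Subgroup (Perm V)) H :=
  Equiv.ofBijective (fun p => ⟨wreathPerm p.1 p.2, p.1, p.2, fun _ => trivial, p.2.2, rfl⟩)
    ⟨fun _ _ e => Prod.ext (wreathPerm_eq_wreathPerm_iff.1 (congrArg Subtype.val e)).1
      (Subtype.ext (wreathPerm_eq_wreathPerm_iff.1 (congrArg Subtype.val e)).2),
    fun ⟨_, g, h, _, hh, e⟩ => ⟨(g, ⟨h, hh⟩), Subtype.ext e.symm⟩⟩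

@[simp]
theorem wreathEquiv_apply_apply [Nonempty V] (p : (Fin n → Perm V) × H) (a : V) (i : Fin n) :
    (wreathEquiv H p : Perm (V × Fin n)) (a, i) = (p.1 i a, (p.2 : Perm (Fin n)) i) :=
  rfl

def IsWreathIntersecting (T : Set ((Fin n → Perm V) × H)) : Prop :=
  ∀ p ∈ T, ∀ q ∈ T,
    ∃ i, (p.2 : Perm (Fin n)) i = (q.2 : Perm (Fin n)) i ∧ ∃ a, p.1 i a = q.1 i a

theorem IsIntersecting.isWreathIntersecting_preimage [Nonempty V]
    {I : Set (wreathProd (⊤ : Subgroup (Perm V)) H)} (hI : IsIntersecting _ I) :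
    IsWreathIntersecting (wreathEquiv H ⁻¹' I) := fun p hp q hq => by
  obtain ⟨⟨a, i⟩, h⟩ := hI _ hp _ hq
  simp only [wreathEquiv_apply_apply, Prod.mk.injEq] at h
  exact ⟨i, h.2, a, h.1⟩

theorem IsWreathIntersecting.isIntersecting_image_snd {T : Set ((Fin n → Perm V) × H)}
    (hT : IsWreathIntersecting T) : IsIntersecting H (Prod.snd '' T) := by
  rintro _ ⟨p, hp, rfl⟩ _ ⟨q, hq, rfl⟩
  obtain ⟨i, hi, -⟩ := hT p hp q hq
  exact ⟨i, hi⟩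

theorem IsWreathIntersecting.exists_apply_eq_of_mem_fiber {T : Set ((Fin n → Perm V) × H)}
    (hT : IsWreathIntersecting T) (h : H) :
    ∀ g ∈ {g | (g, h) ∈ T}, ∀ g' ∈ {g | (g, h) ∈ T}, ∃ i a, g i a = g' i a := by
  intro g hg g' hg'
  obtain ⟨i, -, a, ha⟩ := hT _ hg _ hg'
  exact ⟨i, a, ha⟩

theorem card_stabSet_wreathProd [Finite V] [Nonempty V] (a : V) (i : Fin n) :
    Nat.card (stabSet (wreathProd (⊤ : Subgroup (Perm V)) H) (a, i)) =
      Nat.card {x : Perm V | x a = a} * Nat.card (Perm V) ^ (n - 1) *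
        Nat.card (stabSet H i) := by
  have e : ({g : Fin n → Perm V | g i ∈ {x : Perm V | x a = a}} ×ˢ stabSet H i : Set _) ≃
      stabSet (wreathProd (⊤ : Subgroup (Perm V)) H) (a, i) :=
    (wreathEquiv H).subtypeEquiv fun p => by
      simp [stabSet, Set.mem_prod]
  rw [← Nat.card_congr e, Nat.card_coe_set_eq, Set.ncard_prod, ← Nat.card_coe_set_eq,
    ← Nat.card_coe_set_eq, card_setOf_apply_mem, Fintype.card_fin]

end Wreath

section WreathSym3

variable {n : ℕ} {H : Subgroup (Perm (Fin n))} {T : Set ((Fin n → Perm (Fin 3)) × H)}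

theorem IsWreathIntersecting.card_image_snd_eq_and_card_fiber_eq (hT : IsWreathIntersecting T)
    {v : Fin n} (hv : ∀ J, IsIntersecting H J → Nat.card J ≤ Nat.card (stabSet H v))
    (hcard : Nat.card (stabSet (wreathProd ⊤ H) ((0 : Fin 3), v)) ≤ Nat.card T) :
    Nat.card (Prod.snd '' T) = Nat.card (stabSet H v) ∧
      ∀ h ∈ Prod.snd '' T, Nat.card {g | (g, h) ∈ T} = 2 * 6 ^ (n - 1) := by
  have : Nonempty (Fin n) := ⟨v⟩
  rw [card_stabSet_wreathProd, card_setOf_apply_eq_self, card_perm_fin_three] at hcard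
  refine _root_.card_image_snd_eq_and_card_fiber_eq (by positivity) (fun h => ?_)
    (hv _ hT.isIntersecting_image_snd) hcard
  simpa using card_le_of_forall_exists_apply_eq (hT.exists_apply_eq_of_mem_fiber h)

theorem IsWreathIntersecting.exists_fiber_subset_pair (hT : IsWreathIntersecting T) {h h' : H}
    {j : Fin n} (hagree : ∀ i, (h : Perm (Fin n)) i = (h' : Perm (Fin n)) i → i = j)
    (hfull : Nat.card {g | (g, h') ∈ T} = 2 * 6 ^ (n - 1)) :
    ∃ x y : Perm (Fin 3), sign x = 1 ∧ sign y = -1 ∧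
      {g | (g, h) ∈ T} ⊆ {g | g j ∈ ({x, y} : Set (Perm (Fin 3)))} := by
  have hF := hT.exists_apply_eq_of_mem_fiber h'
  replace hfull : Nat.card {g | (g, h') ∈ T} = 2 * 6 ^ (Fintype.card (Fin n) - 1) := by
    rwa [Fintype.card_fin]
  obtain ⟨gx, hgx, hx⟩ := exists_mem_sign_eq_of_card_eq hF hfull j 1
  obtain ⟨gy, hgy, hy⟩ := exists_mem_sign_eq_of_card_eq hF hfull j (-1)
  refine ⟨gx j, gy j, hx, hy, fun g hg => ?_⟩
  have hmeet : ∀ g' ∈ {g | (g, h') ∈ T}, ∃ a, g j a = g' j a := fun g' hg' => by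
    obtain ⟨i, hi, a, ha⟩ := hT _ hg _ hg'
    exact ⟨a, hagree i hi ▸ ha⟩
  obtain ⟨a, ha⟩ := hmeet gx hgx
  obtain ⟨b, hb⟩ := hmeet gy hgy
  rcases Int.units_eq_one_or (sign (g j)) with hs | hs
  · exact Or.inl (eq_of_sign_eq_of_apply_eq (hs.trans hx.symm) ha)
  · exact Or.inr (eq_of_sign_eq_of_apply_eq (hs.trans hy.symm) hb)

theorem IsWreathIntersecting.forall_mem_apply_mem_pair (hT : IsWreathIntersecting T) {a : H}
    {j : Fin n} {x y : Perm (Fin 3)} (hx : sign x = 1) (hy : sign y = -1)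
    (hcyl : {g | g j ∈ ({x, y} : Set (Perm (Fin 3)))} ⊆ {g | (g, a) ∈ T}) :
    ∀ p ∈ T, p.1 j ∈ ({x, y} : Set (Perm (Fin 3))) := by
  rintro ⟨g, h⟩ hp
  obtain ⟨z, hz, hsz⟩ : ∃ z ∈ ({x, y} : Set (Perm (Fin 3))), sign z = sign (g j) := by
    rcases Int.units_eq_one_or (sign (g j)) with hs | hs
    exacts [⟨x, Or.inl rfl, hx.trans hs.symm⟩, ⟨y, Or.inr rfl, hy.trans hs.symm⟩]
  -- off `j`, the test tuple `g'` disagrees with `g` everywhere, so `(g, h)` must meet it at `j`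
  let g' := Function.update (fun i => finRotate 3 * g i) j z
  obtain ⟨i, -, c, hc⟩ := hT _ hp (g', a) (hcyl (by simpa [g'] using hz))
  by_cases hij : i = j
  · subst hij
    simp only [g', Function.update_self] at hc
    rwa [← eq_of_sign_eq_of_apply_eq hsz.symm hc] at hz
  · simp only [g', Function.update_of_ne hij, Perm.mul_apply] at hc
    exact absurd hc.symm (Perm.mem_support.1 (support_finRotate ▸ Finset.mem_univ _))

theorem IsWreathIntersecting.exists_forall_mem_apply_mem_pair (hT : IsWreathIntersecting T)
    {a : H} {j : Fin n} (hS : Prod.snd '' T = (a * ·) '' stabSet H j)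
    (hfull : ∀ h ∈ Prod.snd '' T, Nat.card {g | (g, h) ∈ T} = 2 * 6 ^ (n - 1))
    {w : Perm (Fin n)} (hwH : w ∈ H) (hw : ∀ i, w i = i ↔ i = j) :
    ∃ x y : Perm (Fin 3), sign x ≠ sign y ∧
      ∀ p ∈ T, p.1 j ∈ ({x, y} : Set (Perm (Fin 3))) := by
  have ha : a ∈ Prod.snd '' T := hS ▸ ⟨1, rfl, mul_one a⟩
  have haw : a * ⟨w, hwH⟩ ∈ Prod.snd '' T := hS ▸ ⟨⟨w, hwH⟩, (hw j).2 rfl, rfl⟩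
  have hagree : ∀ i, (a : Perm (Fin n)) i = ((a * ⟨w, hwH⟩ : H) : Perm (Fin n)) i → i = j :=
    fun i hi => (hw i).1 ((a : Perm (Fin n)).injective (a₂ := w i) hi).symm
  obtain ⟨x, y, hx, hy, hsub⟩ := hT.exists_fiber_subset_pair hagree (hfull _ haw)
  have hxy : sign x ≠ sign y := by rw [hx, hy]; decide
  refine ⟨x, y, hxy, hT.forall_mem_apply_mem_pair (a := a) hx hy ?_⟩
  have hcyl :
      Nat.card {g : Fin n → Perm (Fin 3) | g j ∈ ({x, y} : Set _)} = 2 * 6 ^ (n - 1) := by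
    rw [card_setOf_apply_mem, Nat.card_coe_set_eq, Set.ncard_pair (ne_of_apply_ne _ hxy),
      card_perm_fin_three, Fintype.card_fin]
  refine (Set.eq_of_subset_of_ncard_le hsub ?_ (Set.toFinite _)).symm.subset
  rw [← Nat.card_coe_set_eq, ← Nat.card_coe_set_eq, hcyl, hfull _ ha]

end WreathSym3

theorem S3_wr_H_hasStrictEKR_general {n : ℕ} (H : Subgroup (Equiv.Perm (Fin n)))
    (hH : IsTransitive H) (hstrict : HasStrictEKR H)
    (hfix : ∃ h ∈ H, ∃! i : Fin n, h i = i) :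
    HasStrictEKR (wreathProd (⊤ : Subgroup (Equiv.Perm (Fin 3))) H) := by
  intro I hI hmax
  set T := wreathEquiv H ⁻¹' I
  have hT : IsWreathIntersecting T := hI.isWreathIntersecting_preimage
  have hcardT : Nat.card T = Nat.card I :=
    Nat.card_congr ((wreathEquiv H).subtypeEquiv fun _ => Iff.rfl)
  obtain ⟨v, hv⟩ := hstrict.exists_forall_card_le
  obtain ⟨hS, hfull⟩ := hT.card_image_snd_eq_and_card_fiber_eq hv
    (hcardT ▸ hmax _ (isIntersecting_stabSet _))
  obtain ⟨j, a, hSa⟩ := hstrict _ hT.isIntersecting_image_snd fun J hJ => hS ▸ hv J hJ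
  obtain ⟨w, hwH, hw⟩ := hH.exists_mem_fixing_exactly hfix j
  obtain ⟨x, y, hxy, hTxy⟩ := hT.exists_forall_mem_apply_mem_pair hSa hfull hwH hw
  obtain ⟨b, hb⟩ := exists_apply_eq_of_sign_ne hxy
  refine ⟨(b, j), wreathEquiv H (fun _ => x, a), eq_image_mul_stabSet_of_forall_apply_eq _
    (fun σ hσ => ?_) (hmax _ (isIntersecting_stabSet _))⟩
  obtain ⟨p, rfl⟩ := (wreathEquiv H).surjective σ
  obtain ⟨u, hu, hpu⟩ : p.2 ∈ (a * ·) '' stabSet H j := hSa ▸ Set.mem_image_of_mem _ hσ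
  have hxb : p.1 j b = x b := by
    rcases hTxy p hσ with h | h
    · rw [h]
    · rw [Set.mem_singleton_iff.1 h, hb]
  simp [hxb, ← hpu, show (u : Perm (Fin n)) j = j from hu]

/-- Let `n ≥ 3`. If `H ≤ Sₙ` is transitive, has the strict-EKR-property
and contains an element fixing exactly one point, then `S₃ ≀ H` has the
strict-EKR-property. -/
theorem S3_wr_H_hasStrictEKR {n : ℕ} (hn : 3 ≤ n) (H : Subgroup (Equiv.Perm (Fin n)))
    (hH : IsTransitive H) (hstrict : HasStrictEKR H)
    (hfix : ∃ h ∈ H, ∃! i : Fin n, h i = i) :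
    HasStrictEKR (wreathProd (⊤ : Subgroup (Equiv.Perm (Fin 3))) H) :=
  S3_wr_H_hasStrictEKR_general H hH hstrict hfix
end
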